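/- Under the hypotheses of the approximation lemma (‖Lψ‖ ≤ C‖ψ‖_1 and ‖e^{iLt}ψ‖_1 ≤ B(t)‖ψ‖_1 for all ψ ∈ H^1(Γ), B ∈ L²_loc), let φ^0 and φ^ε solve (φ^0)' = iLφ^0 and (φ^ε)' = (iL − εΓ)φ^ε with common initial datum φ_0 ∈ H^1(Γ). Then for any time t ≤ τ, ‖φ^ε(t) − φ^0(t)‖² ≤ (ε/2) ‖φ_0‖_1² ∫_0^τ B(s)² ds. -/

import Mathlib

/-!
The free solution is `e^{iLt} φ₀`: for the difference `w` of the two, `d/dt ‖w‖² = 2 Re ⟪w, iLw⟫ = 0`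
by the symmetry of `L`. For `δ = φ^ε - φ⁰` the same symmetry removes the `iL` part of
`d/dt ‖δ‖²`, leaving `2ε Re ⟪φ⁰ - φ^ε, Γφ^ε⟫`. With `aₙ`, `bₙ` the coefficients of `φ⁰`, `φ^ε` this is
`2ε ∑ λₙ (Re (āₙ bₙ) - |bₙ|²) ≤ (ε/2) ∑ λₙ |aₙ|² = (ε/2) ‖φ⁰‖₁²`, and integrating in time with
`‖φ⁰(s)‖₁ = ‖e^{iLs} φ₀‖₁ ≤ B(s) ‖φ₀‖₁` gives the estimate.
-/

open MeasureTheory Filter Set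
open scoped InnerProductSpace ENNReal

noncomputable section

variable {H : Type*} [NormedAddCommGroup H] [InnerProductSpace ℂ H] [CompleteSpace H]

/-- The spectral data of a self-adjoint, positive, unbounded operator `Γ` with discrete
spectrum on a separable Hilbert space `H`: the eigenvalues `0 < λ 0 ≤ λ 1 ≤ ⋯ → ∞`
together with an orthonormal (Hilbert) basis of corresponding eigenvectors. -/
structure DiscreteSpectralOp (H : Type*) [NormedAddCommGroup H]
    [InnerProductSpace ℂ H] [CompleteSpace H] where
  /-- the orthonormal eigenbasis of `Γ` -/
  e : HilbertBasis ℕ ℂ H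
  /-- the eigenvalues of `Γ` -/
  lam : ℕ → ℝ
  lam_pos : ∀ n, 0 < lam n
  lam_mono : Monotone lam
  lam_top : Tendsto lam atTop atTop

namespace DiscreteSpectralOp

variable (Γ : DiscreteSpectralOp H)

/-- the coefficients of `ψ` in the eigenbasis of `Γ` -/
def coeff (ψ : H) (n : ℕ) : ℂ := Γ.e.repr ψ n

/-- membership in the (homogeneous) Sobolev space `H^m(Γ)`:
`∑ λ_n^m |c_n|² < ∞` -/
def MemHs (m : ℝ) (ψ : H) : Prop :=
  Summable fun n => Γ.lam n ^ m * ‖Γ.coeff ψ n‖ ^ 2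

/-- the Sobolev norm `‖ψ‖_{H^m(Γ)} = (∑ λ_n^m |c_n|²)^{1/2}` -/
def snorm (m : ℝ) (ψ : H) : ℝ :=
  Real.sqrt (∑' n, Γ.lam n ^ m * ‖Γ.coeff ψ n‖ ^ 2)

/-- the operator `Γ` itself, `Γψ = ∑ λ_n c_n e_n` (junk value off its domain `H²(Γ)`) -/
def apply (ψ : H) : H := ∑' n, ((Γ.lam n : ℂ) * Γ.coeff ψ n) • (Γ.e n : H)

/-- the orthogonal projection `P_N` onto the span of the first `N` eigenvectors of `Γ` -/
def projN (N : ℕ) (ψ : H) : H := ∑ n ∈ Finset.range N, Γ.coeff ψ n • (Γ.e n : H)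

end DiscreteSpectralOp

/-- A strongly continuous one-parameter unitary group `t ↦ U t = e^{iLt}` on `H`
(by Stone's theorem such groups correspond exactly to self-adjoint generators `L`). -/
structure UnitaryGroup (H : Type*) [NormedAddCommGroup H] [InnerProductSpace ℂ H]
    [CompleteSpace H] where
  /-- the unitary operator `e^{iLt}` -/
  U : ℝ → (H ≃ₗᵢ[ℂ] H)
  map_zero : ∀ ψ, U 0 ψ = ψ
  map_add : ∀ s t ψ, U (s + t) ψ = U s (U t ψ)
  strong_cont : ∀ ψ, Continuous fun t => U t ψ

namespace UnitaryGroup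

variable (G : UnitaryGroup H)

/-- `ψ` is an eigenvector of the self-adjoint generator `L` of the group `U t = e^{iLt}`,
i.e. `ψ ≠ 0` and `e^{iLt} ψ = e^{iEt} ψ` for some real eigenvalue `E`. -/
def IsEigenvector (ψ : H) : Prop :=
  ψ ≠ 0 ∧ ∃ E : ℝ, ∀ t : ℝ, G.U t ψ = Complex.exp (Complex.I * E * t) • ψ

/-- the pure point spectral subspace of the generator of the group -/
def ppSpace : Submodule ℂ H :=
  (Submodule.span ℂ {ψ : H | G.IsEigenvector ψ}).topologicalClosure

/-- the spectral projection `P_p` onto the pure point spectral subspace -/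
def Pp (ψ : H) : H :=
  haveI : CompleteSpace (G.ppSpace : Submodule ℂ H) :=
    (Submodule.isClosed_topologicalClosure _).completeSpace_coe
  (Submodule.orthogonalProjectionOnto G.ppSpace ψ : H)

/-- the spectral projection `P_c` onto the continuous spectral subspace -/
def Pc (ψ : H) : H := ψ - G.Pp ψ

end UnitaryGroup

/-- `φ` solves the damped equation `(φ^ε)'(t) = (iL − εΓ)φ^ε(t)`, `φ^ε(0) = φ₀`. -/
def IsDampedSolution (Γ : DiscreteSpectralOp H) (L : H →ₗ[ℂ] H) (ε : ℝ) (φ₀ : H)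
    (φ : ℝ → H) : Prop :=
  φ 0 = φ₀ ∧ ContinuousOn φ (Ici 0) ∧
    ∀ t : ℝ, 0 < t → Γ.MemHs 2 (φ t) ∧
      HasDerivAt φ (Complex.I • L (φ t) - (ε : ℂ) • Γ.apply (φ t)) t

/-- `φ` solves the free equation `(φ⁰)'(t) = iLφ⁰(t)`, `φ⁰(0) = φ₀`. -/
def IsFreeSolution (Γ : DiscreteSpectralOp H) (L : H →ₗ[ℂ] H) (φ₀ : H)
    (φ : ℝ → H) : Prop :=
  φ 0 = φ₀ ∧ ∀ t : ℝ, Γ.MemHs 1 (φ t) ∧ HasDerivAt φ (Complex.I • L (φ t)) t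


section InnerProductSpace

variable {E : Type*} [NormedAddCommGroup E] [InnerProductSpace ℂ E]

theorem HasDerivAt.norm_sq_complex {w : ℝ → E} {w' : E} {x : ℝ} (hw : HasDerivAt w w' x) :
    HasDerivAt (‖w ·‖ ^ 2) (2 * (⟪w x, w'⟫_ℂ).re) x :=
  letI := InnerProductSpace.rclikeToReal ℂ E
  hw.norm_sq

theorem re_inner_I_smul_eq_zero {v w : E} (h : ⟪v, w⟫_ℂ = ⟪w, v⟫_ℂ) :
    (⟪w, Complex.I • v⟫_ℂ).re = 0 := by
  have him : (⟪w, v⟫_ℂ).im = 0 := Complex.conj_eq_iff_im.mp (by rw [inner_conj_symm, h])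
  simp [him]

theorem norm_sq_sub_le_integral_of_two_mul_re_inner_le {w w' : ℝ → E} {g : ℝ → ℝ} {a b : ℝ}
    (hab : a ≤ b) (hw : ContinuousOn w (Icc a b)) (hw' : ∀ x ∈ Ioo a b, HasDerivAt w (w' x) x)
    (hg : IntegrableOn g (Icc a b)) (hbound : ∀ x ∈ Ioo a b, 2 * (⟪w x, w' x⟫_ℂ).re ≤ g x) :
    ‖w b‖ ^ 2 - ‖w a‖ ^ 2 ≤ ∫ x in a..b, g x :=
  intervalIntegral.sub_le_integral_of_hasDeriv_right_of_le hab (hw.norm.pow 2)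
    (fun x hx => (hw' x hx).norm_sq_complex.hasDerivWithinAt) hg hbound

end InnerProductSpace

theorem Complex.re_conj_sub_mul_le (a b : ℂ) :
    ((starRingEnd ℂ) (a - b) * b).re ≤ ‖a‖ ^ 2 / 4 := by
  have hab : ((starRingEnd ℂ) a * b).re ≤ ‖a‖ * ‖b‖ :=
    (Complex.re_le_norm _).trans (by simp)
  have hbb : ((starRingEnd ℂ) b * b).re = ‖b‖ ^ 2 := by
    rw [Complex.conj_mul']; norm_cast
  rw [map_sub, sub_mul, Complex.sub_re, hbb]
  nlinarith [sq_nonneg (‖a‖ / 2 - ‖b‖)]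

namespace DiscreteSpectralOp

variable (Γ : DiscreteSpectralOp H)

theorem coeff_sub (ψ χ : H) (n : ℕ) : Γ.coeff (ψ - χ) n = Γ.coeff ψ n - Γ.coeff χ n := by
  simp [coeff]

theorem snorm_sq (m : ℝ) (ψ : H) :
    Γ.snorm m ψ ^ 2 = ∑' n, Γ.lam n ^ m * ‖Γ.coeff ψ n‖ ^ 2 :=
  Real.sq_sqrt <| tsum_nonneg fun n => by have := (Γ.lam_pos n).le; positivity

variable {Γ}

theorem MemHs.sub {m : ℝ} {ψ χ : H} (hψ : Γ.MemHs m ψ) (hχ : Γ.MemHs m χ) :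
    Γ.MemHs m (ψ - χ) := by
  refine .of_nonneg_of_le (fun n => ?_) (fun n => ?_) ((hψ.add hχ).mul_left 2)
  · have := (Γ.lam_pos n).le; positivity
  · have hl : 0 ≤ Γ.lam n ^ m := Real.rpow_nonneg (Γ.lam_pos n).le m
    have hc : ‖Γ.coeff (ψ - χ) n‖ ^ 2 ≤ 2 * (‖Γ.coeff ψ n‖ ^ 2 + ‖Γ.coeff χ n‖ ^ 2) := by
      rw [coeff_sub]
      exact (pow_le_pow_left₀ (norm_nonneg _) (norm_sub_le _ _) 2).trans add_sq_le
    calc Γ.lam n ^ m * ‖Γ.coeff (ψ - χ) n‖ ^ 2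
        ≤ Γ.lam n ^ m * (2 * (‖Γ.coeff ψ n‖ ^ 2 + ‖Γ.coeff χ n‖ ^ 2)) := by gcongr
      _ = 2 * (Γ.lam n ^ m * ‖Γ.coeff ψ n‖ ^ 2 + Γ.lam n ^ m * ‖Γ.coeff χ n‖ ^ 2) := by ring

theorem MemHs.mono {m m' : ℝ} {ψ : H} (hψ : Γ.MemHs m ψ) (hm : m' ≤ m) : Γ.MemHs m' ψ := by
  refine .of_nonneg_of_le (fun n => ?_) (fun n => ?_) (hψ.mul_left (Γ.lam 0 ^ (m' - m)))
  · have := (Γ.lam_pos n).le; positivity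
  · have hn := Γ.lam_pos n
    have hpow : Γ.lam n ^ (m' - m) ≤ Γ.lam 0 ^ (m' - m) :=
      Real.rpow_le_rpow_of_nonpos (Γ.lam_pos 0) (Γ.lam_mono (Nat.zero_le n)) (by linarith)
    calc Γ.lam n ^ m' * ‖Γ.coeff ψ n‖ ^ 2
        = Γ.lam n ^ (m' - m) * (Γ.lam n ^ m * ‖Γ.coeff ψ n‖ ^ 2) := by
          rw [← mul_assoc, ← Real.rpow_add hn, sub_add_cancel]
      _ ≤ Γ.lam 0 ^ (m' - m) * (Γ.lam n ^ m * ‖Γ.coeff ψ n‖ ^ 2) := by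
          gcongr

theorem hasSum_inner_apply (ψ : H) {χ : H} (hχ : Γ.MemHs 2 χ) :
    HasSum (fun n => (starRingEnd ℂ) (Γ.coeff ψ n) * ((Γ.lam n : ℂ) * Γ.coeff χ n))
      ⟪ψ, Γ.apply χ⟫_ℂ := by
  have hmem : Memℓp (fun n => (Γ.lam n : ℂ) * Γ.coeff χ n) 2 := by
    refine (memℓp_gen_iff (by norm_num)).mpr (hχ.congr fun n => ?_)
    rw [norm_mul, Complex.norm_real, Real.norm_of_nonneg (Γ.lam_pos n).le, ENNReal.toReal_ofNat,
      Real.mul_rpow (Γ.lam_pos n).le (norm_nonneg _), Real.rpow_two (‖_‖)]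
  have happly : Γ.apply χ = Γ.e.repr.symm ⟨_, hmem⟩ := (Γ.e.hasSum_repr_symm ⟨_, hmem⟩).tsum_eq
  rw [happly, ← Γ.e.repr.inner_map_map, LinearIsometryEquiv.apply_symm_apply]
  exact (lp.hasSum_inner _ _).congr_fun fun n => by simp [coeff, mul_comm]

theorem re_inner_sub_apply_le {ψ χ : H} (hψ : Γ.MemHs 1 ψ) (hχ : Γ.MemHs 2 χ) :
    (⟪ψ - χ, Γ.apply χ⟫_ℂ).re ≤ Γ.snorm 1 ψ ^ 2 / 4 := by
  have hL := (Γ.hasSum_inner_apply (ψ - χ) hχ).mapL Complex.reCLM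
  have hR : HasSum (fun n => Γ.lam n ^ (1 : ℝ) * ‖Γ.coeff ψ n‖ ^ 2 / 4) (Γ.snorm 1 ψ ^ 2 / 4) := by
    rw [snorm_sq]; exact hψ.hasSum.div_const 4
  refine hasSum_le (fun n => ?_) hL hR
  have hre : ((starRingEnd ℂ) (Γ.coeff (ψ - χ) n) * ((Γ.lam n : ℂ) * Γ.coeff χ n)).re
      = Γ.lam n * ((starRingEnd ℂ) (Γ.coeff ψ n - Γ.coeff χ n) * Γ.coeff χ n).re := by
    rw [coeff_sub, mul_left_comm, Complex.re_ofReal_mul]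
  simp only [Complex.reCLM_apply, hre, Real.rpow_one, mul_div_assoc]
  exact mul_le_mul_of_nonneg_left (Complex.re_conj_sub_mul_le _ _) (Γ.lam_pos n).le

end DiscreteSpectralOp

theorem UnitaryGroup.hasDerivAt_apply (G : UnitaryGroup H) {ψ v : H} {x : ℝ}
    (h : HasDerivAt (fun t => G.U t (G.U x ψ)) v 0) : HasDerivAt (fun t => G.U t ψ) v x := by
  have h' := HasDerivAt.comp_sub_const x x (by rwa [sub_self])
  refine h'.congr_of_eventuallyEq (.of_forall fun t => ?_)
  dsimp only
  rw [← G.map_add, sub_add_cancel]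

variable {Γ : DiscreteSpectralOp H} {L : H →ₗ[ℂ] H}

theorem IsFreeSolution.eq_unitaryGroup {G : UnitaryGroup H} {φ₀ : H} {φ : ℝ → H}
    (hφ : IsFreeSolution Γ L φ₀ φ)
    (hsym : ∀ ψ : H, Γ.MemHs 1 ψ → ⟪L ψ, ψ⟫_ℂ = ⟪ψ, L ψ⟫_ℂ)
    (hgen : ∀ ψ : H, Γ.MemHs 1 ψ → HasDerivAt (fun t => G.U t ψ) (Complex.I • L ψ) 0)
    (hU : ∀ t : ℝ, 0 < t → Γ.MemHs 1 (G.U t φ₀)) {t : ℝ} (ht : 0 ≤ t) :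
    φ t = G.U t φ₀ := by
  set w : ℝ → H := fun s => φ s - G.U s φ₀
  have hw : Continuous w :=
    (continuous_iff_continuousAt.mpr fun s => (hφ.2 s).2.continuousAt).sub (G.strong_cont φ₀)
  have hw' : ∀ x ∈ Ioo 0 t, HasDerivAt w (Complex.I • L (w x)) x := fun x hx => by
    have h := (hφ.2 x).2.sub (G.hasDerivAt_apply (hgen _ (hU x hx.1)))
    rwa [← smul_sub, ← map_sub] at h
  have hconst : ∀ x ∈ Ioo 0 t, 2 * (⟪w x, Complex.I • L (w x)⟫_ℂ).re ≤ 0 := fun x hx => by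
    rw [re_inner_I_smul_eq_zero (hsym _ (((hφ.2 x).1).sub (hU x hx.1))), mul_zero]
  have hle := norm_sq_sub_le_integral_of_two_mul_re_inner_le ht hw.continuousOn hw'
    integrableOn_zero hconst
  have hw0 : w 0 = 0 := by simp [w, hφ.1, G.map_zero]
  rw [hw0, intervalIntegral.integral_zero, norm_zero, sub_nonpos] at hle
  simpa [w, sub_eq_zero] using hle

theorem re_inner_sub_damped_le {ψ χ : H} (hψ : Γ.MemHs 1 ψ) (hχ : Γ.MemHs 2 χ)
    (hsym : ∀ ψ : H, Γ.MemHs 1 ψ → ⟪L ψ, ψ⟫_ℂ = ⟪ψ, L ψ⟫_ℂ) {ε : ℝ} (hε : 0 ≤ ε) :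
    2 * (⟪χ - ψ, (Complex.I • L χ - (ε : ℂ) • Γ.apply χ) - Complex.I • L ψ⟫_ℂ).re
      ≤ ε / 2 * Γ.snorm 1 ψ ^ 2 := by
  have hsplit : (Complex.I • L χ - (ε : ℂ) • Γ.apply χ) - Complex.I • L ψ
      = Complex.I • L (χ - ψ) - (ε : ℂ) • Γ.apply χ := by
    rw [map_sub, smul_sub]; abel
  have hfree : (⟪χ - ψ, Complex.I • L (χ - ψ)⟫_ℂ).re = 0 :=
    re_inner_I_smul_eq_zero (hsym _ ((hχ.mono one_le_two).sub hψ))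
  have hdamp : (⟪χ - ψ, (ε : ℂ) • Γ.apply χ⟫_ℂ).re = -ε * (⟪ψ - χ, Γ.apply χ⟫_ℂ).re := by
    rw [inner_smul_right, Complex.re_ofReal_mul, ← neg_sub ψ, inner_neg_left, Complex.neg_re]
    ring
  rw [hsplit, inner_sub_right, Complex.sub_re, hfree, hdamp]
  nlinarith [Γ.re_inner_sub_apply_le hψ hχ]

theorem IsDampedSolution.norm_sub_sq_le_integral {ε : ℝ} {φ₀ : H} {φe φ0 : ℝ → H}
    (hφe : IsDampedSolution Γ L ε φ₀ φe) (hφ0 : IsFreeSolution Γ L φ₀ φ0)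
    (hsym : ∀ ψ : H, Γ.MemHs 1 ψ → ⟪L ψ, ψ⟫_ℂ = ⟪ψ, L ψ⟫_ℂ) (hε : 0 ≤ ε)
    {g : ℝ → ℝ} {t : ℝ} (ht : 0 ≤ t) (hg : IntegrableOn g (Icc 0 t))
    (hφ0g : ∀ s ∈ Ioo 0 t, Γ.snorm 1 (φ0 s) ^ 2 ≤ g s) :
    ‖φe t - φ0 t‖ ^ 2 ≤ ε / 2 * ∫ s in 0..t, g s := by
  have hφ0c : Continuous φ0 := continuous_iff_continuousAt.mpr fun s => (hφ0.2 s).2.continuousAt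
  have hle := norm_sq_sub_le_integral_of_two_mul_re_inner_le (g := fun s => ε / 2 * g s) ht
    ((hφe.2.1.mono Icc_subset_Ici_self).sub hφ0c.continuousOn)
    (fun x hx => (hφe.2.2 x hx.1).2.sub (hφ0.2 x).2) (hg.const_mul _)
    (fun x hx => (re_inner_sub_damped_le (hφ0.2 x).1 (hφe.2.2 x hx.1).1 hsym hε).trans
      (by gcongr; exact hφ0g x hx))
  simpa [hφe.1, hφ0.1, intervalIntegral.integral_const_mul] using hle

theorem approximation_corollary_general
    (Γ : DiscreteSpectralOp H) (L : H →ₗ[ℂ] H) (G : UnitaryGroup H)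
    (hsym : ∀ ψ χ : H, Γ.MemHs 1 ψ → Γ.MemHs 1 χ → ⟪L ψ, χ⟫_ℂ = ⟪ψ, L χ⟫_ℂ)
    (hgen : ∀ ψ : H, Γ.MemHs 1 ψ →
      HasDerivAt (fun t => G.U t ψ) (Complex.I • L ψ) 0)
    (B : ℝ → ℝ) (hBloc : ∀ T : ℝ, 0 < T → IntegrableOn (fun t => (B t) ^ 2) (Ioc 0 T))
    (hB : ∀ ψ : H, Γ.MemHs 1 ψ → ∀ t : ℝ, 0 < t →
      Γ.MemHs 1 (G.U t ψ) ∧ Γ.snorm 1 (G.U t ψ) ≤ B t * Γ.snorm 1 ψ)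
    (ε : ℝ) (hε : 0 < ε) (φ₀ : H) (hφ₀ : Γ.MemHs 1 φ₀)
    (φe : ℝ → H) (hφe : IsDampedSolution Γ L ε φ₀ φe)
    (φ0 : ℝ → H) (hφ0 : IsFreeSolution Γ L φ₀ φ0)
    (τ : ℝ) (hτ : 0 < τ) :
    ∀ t ∈ Icc (0 : ℝ) τ,
      ‖φe t - φ0 t‖ ^ 2 ≤
        ε / 2 * Γ.snorm 1 φ₀ ^ 2 * ∫ s in Ioc (0 : ℝ) τ, (B s) ^ 2 := by
  intro t ht
  have hsym' : ∀ ψ : H, Γ.MemHs 1 ψ → ⟪L ψ, ψ⟫_ℂ = ⟪ψ, L ψ⟫_ℂ := fun ψ hψ => hsym ψ ψ hψ hψ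
  have hB2 : IntegrableOn (fun s => B s ^ 2) (Ioc 0 τ) := hBloc τ hτ
  have hIoc : Ioc 0 t ⊆ Ioc 0 τ := Ioc_subset_Ioc_right ht.2
  have hφ0B : ∀ s ∈ Ioo 0 t, Γ.snorm 1 (φ0 s) ^ 2 ≤ Γ.snorm 1 φ₀ ^ 2 * B s ^ 2 := fun s hs => by
    rw [hφ0.eq_unitaryGroup hsym' hgen (fun r hr => (hB φ₀ hφ₀ r hr).1) hs.1.le, ← mul_pow,
      mul_comm]
    exact pow_le_pow_left₀ (Real.sqrt_nonneg _) (hB φ₀ hφ₀ s hs.1).2 2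
  have hint : IntegrableOn (fun s => Γ.snorm 1 φ₀ ^ 2 * B s ^ 2) (Icc 0 t) :=
    ((integrableOn_Icc_iff_integrableOn_Ioc).mpr (hB2.mono_set hIoc)).const_mul _
  calc ‖φe t - φ0 t‖ ^ 2 ≤ ε / 2 * ∫ s in 0..t, Γ.snorm 1 φ₀ ^ 2 * B s ^ 2 :=
        hφe.norm_sub_sq_le_integral hφ0 hsym' hε.le ht.1 hint hφ0B
    _ = ε / 2 * Γ.snorm 1 φ₀ ^ 2 * ∫ s in Ioc 0 t, B s ^ 2 := by
        rw [intervalIntegral.integral_of_le ht.1, integral_const_mul, mul_assoc]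
    _ ≤ ε / 2 * Γ.snorm 1 φ₀ ^ 2 * ∫ s in Ioc 0 τ, B s ^ 2 := by
        have hmono := setIntegral_mono_set hB2 (.of_forall fun s => sq_nonneg (B s))
          hIoc.eventuallyLE
        exact mul_le_mul_of_nonneg_left hmono (by positivity)

/-- **Corollary 2.6.**  Under conditions (2.1) and (2.2), if `φ⁰` and `φ^ε` solve
`(φ⁰)' = iLφ⁰` and `(φ^ε)' = (iL − εΓ)φ^ε` with the same initial datum `φ₀ ∈ H¹(Γ)`,
then `‖φ^ε(t) − φ⁰(t)‖² ≤ (ε/2)‖φ₀‖₁² ∫₀^τ B(s)² ds` for every `0 ≤ t ≤ τ`. -/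
theorem approximation_corollary
    (Γ : DiscreteSpectralOp H) (L : H →ₗ[ℂ] H) (G : UnitaryGroup H)
    (hsym : ∀ ψ χ : H, Γ.MemHs 1 ψ → Γ.MemHs 1 χ → ⟪L ψ, χ⟫_ℂ = ⟪ψ, L χ⟫_ℂ)
    (hgen : ∀ ψ : H, Γ.MemHs 1 ψ →
      HasDerivAt (fun t => G.U t ψ) (Complex.I • L ψ) 0)
    (C : ℝ) (hL : ∀ ψ : H, Γ.MemHs 1 ψ → ‖L ψ‖ ≤ C * Γ.snorm 1 ψ)
    (B : ℝ → ℝ) (hBloc : ∀ T : ℝ, 0 < T → IntegrableOn (fun t => (B t) ^ 2) (Ioc 0 T))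
    (hB : ∀ ψ : H, Γ.MemHs 1 ψ → ∀ t : ℝ, 0 < t →
      Γ.MemHs 1 (G.U t ψ) ∧ Γ.snorm 1 (G.U t ψ) ≤ B t * Γ.snorm 1 ψ)
    (ε : ℝ) (hε : 0 < ε) (φ₀ : H) (hφ₀ : Γ.MemHs 1 φ₀)
    (φe : ℝ → H) (hφe : IsDampedSolution Γ L ε φ₀ φe)
    (φ0 : ℝ → H) (hφ0 : IsFreeSolution Γ L φ₀ φ0)
    (τ : ℝ) (hτ : 0 < τ) :
    ∀ t ∈ Icc (0 : ℝ) τ,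
      ‖φe t - φ0 t‖ ^ 2 ≤
        ε / 2 * Γ.snorm 1 φ₀ ^ 2 * ∫ s in Ioc (0 : ℝ) τ, (B s) ^ 2 :=
  approximation_corollary_general Γ L G hsym hgen B hBloc hB ε hε φ₀ hφ₀ φe hφe φ0 hφ0 τ hτ
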